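/- The digraph F₈ on vertices v₀,…,v₇ (indices mod 8) with arc set ⋃_{i=0}^{3} {(v_{2i}, v_{2i+1}), (v_{2i}, v_{2i+2}), (v_{2i}, v_{2i+3}), (v_{2i+1}, v_{2i+2}), (v_{2i+1}, v_{2i+3})} is a strongly connected digraph on 8 vertices with 20 arcs containing no directed cycle of length 2 or 3. -/
import Mathlib


open scoped Classical

noncomputable section

/-- `D` has a directed cycle of length `ℓ`: `ℓ` distinct vertices cyclically joined by arcs. -/
def HasDicycle {V : Type*} (A : V → V → Prop) (ℓ : ℕ) : Prop :=
  ∃ c : ZMod ℓ → V, Function.Injective c ∧ ∀ i, A (c i) (c (i + 1))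

/-- Strong connectivity: every vertex reachable from every vertex. -/
def Strong {V : Type*} (A : V → V → Prop) : Prop :=
  ∀ u v : V, Relation.ReflTransGen A u v

def outDeg {V : Type*} [Fintype V] (A : V → V → Prop) (v : V) : ℕ :=
  (Finset.univ.filter fun u => A v u).card

def inDeg {V : Type*} [Fintype V] (A : V → V → Prop) (v : V) : ℕ :=
  (Finset.univ.filter fun u => A u v).card

def arcs {V : Type*} [Fintype V] (A : V → V → Prop) : ℕ :=
  (Finset.univ.filter fun p : V × V => A p.1 p.2).card

/-- The digraph F₈ on `ZMod 8`: an even vertex `a` dominates `a+1, a+2, a+3`,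
an odd vertex `a` dominates `a+1, a+2`. -/
def F8 (a b : ZMod 8) : Prop :=
  if a.val % 2 = 0 then (b = a + 1 ∨ b = a + 2 ∨ b = a + 3) else (b = a + 1 ∨ b = a + 2)


instance F8.dec (a b : ZMod 8) : Decidable (F8 a b) := by
  unfold F8; infer_instance

attribute [-instance] Classical.propDecidable in
instance : Decidable (HasDicycle F8 2) := by
  unfold HasDicycle; infer_instance

attribute [-instance] Classical.propDecidable in
instance : Decidable (HasDicycle F8 3) := by
  unfold HasDicycle; infer_instance

lemma F8.step (a : ZMod 8) : F8 a (a + 1) := by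
  unfold F8; split <;> exact Or.inl rfl

lemma F8.reach (a : ZMod 8) : ∀ n : ℕ, Relation.ReflTransGen F8 a (a + n)
  | 0 => by simpa using Relation.ReflTransGen.refl
  | n + 1 => by
      have h := (F8.reach a n).tail (F8.step (a + n))
      have e : a + ((n + 1 : ℕ) : ZMod 8) = a + n + 1 := by push_cast; ring
      rwa [e]

set_option maxRecDepth 10000 in
theorem stmt2 :
    Fintype.card (ZMod 8) = 8 ∧
    (∀ a, ¬ F8 a a) ∧
    Strong F8 ∧
    ¬ HasDicycle F8 2 ∧ ¬ HasDicycle F8 3 ∧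
    arcs F8 = 20 := by
  refine ⟨by decide, by decide, ?_, by decide, by decide, ?_⟩
  · intro u v
    have h := F8.reach u (v - u).val
    rwa [ZMod.natCast_val, ZMod.cast_id, add_sub_cancel] at h
  · unfold arcs
    rw [Finset.filter_congr_decidable]
    decide
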